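/- Let u^low and v^low be tempered distributions on ℝ² whose space-time Fourier transforms are supported in the 'low modulation' region ⋃_{k≥15} {(ξ,τ) : ξ ∈ I_k, |τ-ω(ξ)| ≤ 2^{k-14}} (where ω(ξ) = -ξ|ξ|). Then the product u^low · v^low has no low-modulation part: for every k ≥ 15, η_k(ξ) η_{≤k-15}(τ-ω(ξ)) F(u^low v^low)(ξ,τ) ≡ 0. -/

import Mathlib

open MeasureTheory

noncomputable section

/-- Benjamin–Ono dispersion relation. -/
def ω (ξ : ℝ) : ℝ := -ξ * |ξ|

/-- 1D Fourier transform (analyst's convention, kernel `e^{-ixξ}`). -/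
def F1 (f : ℝ → ℂ) (ξ : ℝ) : ℂ :=
  ∫ x : ℝ, Complex.exp (-Complex.I * ((x * ξ : ℝ) : ℂ)) * f x

/-- 1D inverse Fourier transform. -/
def F1inv (f : ℝ → ℂ) (x : ℝ) : ℂ :=
  (((2 * Real.pi : ℝ)⁻¹ : ℝ) : ℂ) *
    ∫ ξ : ℝ, Complex.exp (Complex.I * ((x * ξ : ℝ) : ℂ)) * f ξ

/-- 2D (space-time) Fourier transform. -/
def F2 (f : ℝ × ℝ → ℂ) (q : ℝ × ℝ) : ℂ :=
  ∫ p : ℝ × ℝ, Complex.exp (-Complex.I * ((p.1 * q.1 + p.2 * q.2 : ℝ) : ℂ)) * f p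

/-- 2D inverse (space-time) Fourier transform. -/
def F2inv (f : ℝ × ℝ → ℂ) (p : ℝ × ℝ) : ℂ :=
  ((((2 * Real.pi) ^ 2 : ℝ)⁻¹ : ℝ) : ℂ) *
    ∫ q : ℝ × ℝ, Complex.exp (Complex.I * ((p.1 * q.1 + p.2 * q.2 : ℝ) : ℂ)) * f q

/-- Mixed norm `L^p_x L^q_t` of `u = u x t`. -/
def MixedNorm (p q : ENNReal) (u : ℝ → ℝ → ℂ) : ℝ :=
  (eLpNorm (fun x => (eLpNorm (u x) q volume).toReal) p volume).toReal

/-- Dyadic frequency annulus `I_k`. -/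
def Idy (k : ℤ) : Set ℝ := {ξ : ℝ | (2 : ℝ) ^ (k - 1) ≤ |ξ| ∧ |ξ| ≤ (2 : ℝ) ^ (k + 1)}

/-- The smooth dyadic bump `χ_l` built from `η₀`. -/
def chi (η₀ : ℝ → ℝ) (l : ℤ) (ξ : ℝ) : ℝ := η₀ (ξ / 2 ^ l) - η₀ (ξ / 2 ^ (l - 1))

section AuxLowMod

open FourierTransform SchwartzMap Function
open scoped RealInnerProductSpace

namespace LowModAux

def toC (q : ℝ × ℝ) : ℂ := Complex.equivRealProdCLM.symm q

@[simp] lemma toC_re (q : ℝ × ℝ) : (toC q).re = q.1 := by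
  simp [toC, Complex.equivRealProdCLM_symm_apply]

@[simp] lemma toC_im (q : ℝ × ℝ) : (toC q).im = q.2 := by
  simp [toC, Complex.equivRealProdCLM_symm_apply]

lemma e_apply (z : ℂ) : Complex.measurableEquivRealProd z = (z.re, z.im) := rfl

lemma e_symm (q : ℝ × ℝ) : Complex.measurableEquivRealProd.symm q = toC q := by
  apply Complex.measurableEquivRealProd.injective
  apply Prod.ext <;> simp [e_apply]

lemma inner_toC (z : ℂ) (q : ℝ × ℝ) : ⟪z, toC q⟫ = z.re * q.1 + z.im * q.2 := by
  rw [Complex.inner]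
  simp [Complex.mul_re]; ring

def fC (f : SchwartzMap (ℝ × ℝ) ℂ) : SchwartzMap ℂ ℂ :=
  compCLMOfContinuousLinearEquiv ℝ Complex.equivRealProdCLM f

lemma fC_apply (f : SchwartzMap (ℝ × ℝ) ℂ) (z : ℂ) : fC f z = f (z.re, z.im) := rfl

lemma F2_eq (f : ℝ × ℝ → ℂ) (q : ℝ × ℝ) :
    F2 f q = 𝓕 (fun z : ℂ => f (z.re, z.im)) ((2 * Real.pi)⁻¹ • toC q) := by
  rw [Real.fourier_eq', F2,
    ← MeasurePreserving.integral_comp' Complex.volume_preserving_equiv_real_prod]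
  congr 1
  funext z
  rw [smul_eq_mul, e_apply]
  congr 1
  have h1 : ⟪z, (2 * Real.pi)⁻¹ • toC q⟫ = (2 * Real.pi)⁻¹ * (z.re * q.1 + z.im * q.2) := by
    rw [real_inner_smul_right, inner_toC]
  rw [h1]
  have hπ : (2 * Real.pi) ≠ 0 := by positivity
  have h2 : -2 * Real.pi * ((2 * Real.pi)⁻¹ * (z.re * q.1 + z.im * q.2))
      = -(z.re * q.1 + z.im * q.2) := by field_simp
  rw [h2]
  push_cast
  ring

lemma F2_as (f : SchwartzMap (ℝ × ℝ) ℂ) :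
    F2 ⇑f = fun q => (fourierTransformCLM ℝ (fC f)) ((2 * Real.pi)⁻¹ • toC q) := by
  funext q
  rw [F2_eq, fourierTransformCLM_apply]
  rfl

lemma F2_integrable (f : SchwartzMap (ℝ × ℝ) ℂ) : Integrable (F2 ⇑f) volume := by
  rw [F2_as]
  have h2π : ((2 * Real.pi)⁻¹ : ℝ) ≠ 0 := inv_ne_zero (by positivity)
  have h1 : Integrable (fun z : ℂ => (fourierTransformCLM ℝ (fC f)) ((2 * Real.pi)⁻¹ • z))
      volume := (SchwartzMap.integrable _).comp_smul h2π
  have key : (fun q : ℝ × ℝ => (fourierTransformCLM ℝ (fC f)) ((2 * Real.pi)⁻¹ • toC q))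
      = (fun z : ℂ => (fourierTransformCLM ℝ (fC f)) ((2 * Real.pi)⁻¹ • z))
        ∘ (Complex.measurableEquivRealProd.symm) := by
    funext q; simp only [Function.comp_apply, e_symm]
  rw [key]
  exact ((Complex.volume_preserving_equiv_real_prod.symm _).integrable_comp_emb
    (MeasurableEquiv.measurableEmbedding _)).mpr h1

lemma F2_continuous (f : SchwartzMap (ℝ × ℝ) ℂ) : Continuous (F2 ⇑f) := by
  rw [F2_as]
  have hc : Continuous toC := Complex.equivRealProdCLM.symm.continuous
  exact (SchwartzMap.continuous _).comp
    (show Continuous fun q => ((2 * Real.pi)⁻¹ : ℝ) • toC q from (continuous_const_smul ((2 * Real.pi)⁻¹ : ℝ)).comp hc)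


-- inversion
lemma schwartz_inv (v : SchwartzMap (ℝ × ℝ) ℂ) (p : ℝ × ℝ) :
    (v p : ℂ) = (((2 * Real.pi) ^ 2)⁻¹ : ℝ) •
      ∫ r : ℝ × ℝ, Complex.exp (Complex.I * ((p.1 * r.1 + p.2 * r.2 : ℝ) : ℂ)) * F2 ⇑v r := by
  have hW : Integrable (𝓕 ⇑(fC v)) volume := by
    rw [← SchwartzMap.fourier_coe]
    exact SchwartzMap.integrable _
  have hinv : 𝓕⁻ (𝓕 ⇑(fC v)) (toC p) = fC v (toC p) :=
    (fC v).integrable.fourierInv_fourier_eq hW ((fC v).continuous.continuousAt)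
  have hvp : fC v (toC p) = v p := by
    rw [fC_apply]; simp
  rw [Real.fourierInv_eq'] at hinv
  -- change of variables w = (2π)⁻¹ • z on ℂ
  have hcv := Measure.integral_comp_smul (volume : Measure ℂ)
    (fun w : ℂ => Complex.exp ((↑(2 * Real.pi * ⟪w, toC p⟫) * Complex.I)) • 𝓕 (⇑(fC v)) w)
    ((2 * Real.pi)⁻¹)
  rw [Complex.finrank_real_complex] at hcv
  have hπ : (0:ℝ) < 2 * Real.pi := by positivity
  have habs : |(((2 * Real.pi)⁻¹ : ℝ) ^ 2)⁻¹| = (2 * Real.pi) ^ 2 := by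
    rw [abs_of_nonneg (by positivity)]; field_simp
  rw [habs] at hcv
  -- identify the rescaled integrand with the F2-integrand transported to ℂ
  have hident : (fun z : ℂ => Complex.exp ((↑(2 * Real.pi * ⟪(2 * Real.pi)⁻¹ • z, toC p⟫)
        * Complex.I)) • 𝓕 (⇑(fC v)) ((2 * Real.pi)⁻¹ • z))
      = fun z : ℂ => Complex.exp (Complex.I *
          (((Complex.measurableEquivRealProd z).1 * p.1
            + (Complex.measurableEquivRealProd z).2 * p.2 : ℝ) : ℂ))
          * F2 ⇑v (Complex.measurableEquivRealProd z) := by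
    funext z
    have h1 : ⟪(2 * Real.pi)⁻¹ • z, toC p⟫ = (2 * Real.pi)⁻¹ * (z.re * p.1 + z.im * p.2) := by
      rw [real_inner_smul_left, inner_toC]
    have h2 : 2 * Real.pi * ((2 * Real.pi)⁻¹ * (z.re * p.1 + z.im * p.2))
        = z.re * p.1 + z.im * p.2 := by field_simp
    have h3 : F2 ⇑v (Complex.measurableEquivRealProd z)
        = 𝓕 (⇑(fC v)) ((2 * Real.pi)⁻¹ • z) := by
      have hz : toC (z.re, z.im) = z := by apply Complex.ext <;> simp
      rw [F2_eq, e_apply, hz]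
      rfl
    rw [h1, h2, h3, smul_eq_mul, e_apply]
    push_cast
    ring_nf
  rw [hident] at hcv
  -- transfer the ℂ integral to ℝ × ℝ
  have htrans := MeasurePreserving.integral_comp' Complex.volume_preserving_equiv_real_prod
    (fun r : ℝ × ℝ => Complex.exp (Complex.I * ((r.1 * p.1 + r.2 * p.2 : ℝ) : ℂ)) * F2 ⇑v r)
  rw [htrans] at hcv
  -- put everything together
  rw [← hvp, ← hinv]
  have horder : (∫ r : ℝ × ℝ, Complex.exp (Complex.I * ((p.1 * r.1 + p.2 * r.2 : ℝ) : ℂ))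
        * F2 ⇑v r)
      = ∫ r : ℝ × ℝ, Complex.exp (Complex.I * ((r.1 * p.1 + r.2 * p.2 : ℝ) : ℂ)) * F2 ⇑v r := by
    congr 1; funext r; rw [mul_comm p.1, mul_comm p.2]
  have hone : (((2 * Real.pi) ^ 2)⁻¹ : ℝ) * (2 * Real.pi) ^ 2 = 1 := by
    field_simp
  rw [horder, hcv, smul_smul, hone, one_smul]

lemma F2_mul (u v : SchwartzMap (ℝ × ℝ) ℂ) (q : ℝ × ℝ) :
    F2 (fun p => u p * v p) q = (((2 * Real.pi) ^ 2)⁻¹ : ℝ) •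
      ∫ r : ℝ × ℝ, F2 ⇑u (q - r) * F2 ⇑v r := by
  have hΦint : Integrable (fun z : (ℝ × ℝ) × (ℝ × ℝ) =>
      (Complex.exp (-Complex.I * ((z.1.1 * q.1 + z.1.2 * q.2 : ℝ) : ℂ)) *
        Complex.exp (Complex.I * ((z.1.1 * z.2.1 + z.1.2 * z.2.2 : ℝ) : ℂ))) *
      (u z.1 * F2 ⇑v z.2)) ((volume : Measure (ℝ × ℝ)).prod volume) := by
    refine Integrable.bdd_mul (c := 1) (u.integrable.mul_prod (F2_integrable v)) ?_
      (Filter.Eventually.of_forall fun z => ?_)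
    · apply Continuous.aestronglyMeasurable
      fun_prop
    · rw [norm_mul]
      simp only [Complex.norm_exp]
      simp [Complex.mul_re]
  calc F2 (fun p => u p * v p) q
      = ∫ p : ℝ × ℝ, Complex.exp (-Complex.I * ((p.1 * q.1 + p.2 * q.2 : ℝ) : ℂ)) *
          (u p * v p) := rfl
    _ = ∫ p : ℝ × ℝ, (((2 * Real.pi) ^ 2)⁻¹ : ℝ) •
          ∫ r : ℝ × ℝ, (Complex.exp (-Complex.I * ((p.1 * q.1 + p.2 * q.2 : ℝ) : ℂ)) *
            Complex.exp (Complex.I * ((p.1 * r.1 + p.2 * r.2 : ℝ) : ℂ))) *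
            (u p * F2 ⇑v r) := by
        congr 1; funext p
        rw [schwartz_inv v p, mul_smul_comm, mul_smul_comm]
        congr 1
        rw [← integral_const_mul, ← integral_const_mul]
        congr 1
        funext r
        ring
    _ = (((2 * Real.pi) ^ 2)⁻¹ : ℝ) • ∫ p : ℝ × ℝ,
          ∫ r : ℝ × ℝ, (Complex.exp (-Complex.I * ((p.1 * q.1 + p.2 * q.2 : ℝ) : ℂ)) *
            Complex.exp (Complex.I * ((p.1 * r.1 + p.2 * r.2 : ℝ) : ℂ))) *
            (u p * F2 ⇑v r) := integral_smul _ _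
    _ = (((2 * Real.pi) ^ 2)⁻¹ : ℝ) • ∫ r : ℝ × ℝ,
          ∫ p : ℝ × ℝ, (Complex.exp (-Complex.I * ((p.1 * q.1 + p.2 * q.2 : ℝ) : ℂ)) *
            Complex.exp (Complex.I * ((p.1 * r.1 + p.2 * r.2 : ℝ) : ℂ))) *
            (u p * F2 ⇑v r) := by rw [integral_integral_swap hΦint]
    _ = (((2 * Real.pi) ^ 2)⁻¹ : ℝ) • ∫ r : ℝ × ℝ, F2 ⇑u (q - r) * F2 ⇑v r := by
        congr 1
        congr 1
        funext r
        rw [show F2 ⇑u (q - r) = ∫ p : ℝ × ℝ, Complex.exp (-Complex.I *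
            (((p.1 * (q - r).1 + p.2 * (q - r).2 : ℝ)) : ℂ)) * u p from rfl]
        rw [← integral_mul_const]
        congr 1
        funext p
        rw [← Complex.exp_add]
        have : -Complex.I * ((p.1 * (q-r).1 + p.2 * (q-r).2 : ℝ) : ℂ)
            = -Complex.I * ((p.1 * q.1 + p.2 * q.2 : ℝ) : ℂ)
              + Complex.I * ((p.1 * r.1 + p.2 * r.2 : ℝ) : ℂ) := by
          have h1 : (q - r).1 = q.1 - r.1 := rfl
          have h2 : (q - r).2 = q.2 - r.2 := rfl
          rw [h1, h2]
          push_cast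
          ring
        rw [this]
        ring

lemma resonance_lb (m a b : ℝ) (hm : 0 ≤ m) (ha : m ≤ |a|) (hb : m ≤ |b|)
    (hc : m ≤ |a + b|) :
    m * |a| ≤ abs ((a+b)*|a+b| - a*|a| - b*|b|) ∧
    m * |b| ≤ abs ((a+b)*|a+b| - a*|a| - b*|b|) ∧
    m * |a + b| ≤ abs ((a+b)*|a+b| - a*|a| - b*|b|) := by
  rcases abs_cases a with ⟨h1,s1⟩|⟨h1,s1⟩ <;> rcases abs_cases b with ⟨h2,s2⟩|⟨h2,s2⟩ <;>
    rcases abs_cases (a+b) with ⟨h3,s3⟩|⟨h3,s3⟩ <;>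
    simp only [h1, h2, h3] at ha hb hc ⊢ <;>
    refine ⟨le_abs.2 ?_, le_abs.2 ?_, le_abs.2 ?_⟩ <;>
    first
    | exact Or.inl (by nlinarith)
    | exact Or.inr (by nlinarith)

lemma chi_ne_bounds {η₀ : ℝ → ℝ}
    (hη₀s : Function.support η₀ ⊆ Set.Icc (-8/5 : ℝ) (8/5))
    (hη₀1 : ∀ ξ ∈ Set.Icc (-(5 : ℝ)/4) (5/4), η₀ ξ = 1)
    {l : ℤ} {ξ : ℝ} (h : chi η₀ l ξ ≠ 0) :
    (2 : ℝ) ^ (l - 1) ≤ |ξ| ∧ |ξ| ≤ (2 : ℝ) ^ (l + 1) := by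
  have ht : (0:ℝ) < (2:ℝ) ^ l := zpow_pos (by norm_num) _
  have htm : ((2:ℝ) ^ (l - 1)) = (2:ℝ) ^ l / 2 := by
    rw [zpow_sub₀ (by norm_num : (2:ℝ) ≠ 0), zpow_one]
  have htp : ((2:ℝ) ^ (l + 1)) = (2:ℝ) ^ l * 2 := by
    rw [zpow_add₀ (by norm_num : (2:ℝ) ≠ 0), zpow_one]
  constructor
  · by_contra hlt
    push_neg at hlt
    rw [htm] at hlt
    apply h
    have h1 : η₀ (ξ / 2 ^ l) = 1 := by
      apply hη₀1
      constructor
      · rw [le_div_iff₀ ht]; nlinarith [abs_nonneg ξ, neg_abs_le ξ]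
      · rw [div_le_iff₀ ht]; nlinarith [le_abs_self ξ]
    have h2 : η₀ (ξ / 2 ^ (l-1)) = 1 := by
      apply hη₀1
      rw [htm]
      constructor
      · rw [le_div_iff₀ (by linarith)]; nlinarith [neg_abs_le ξ]
      · rw [div_le_iff₀ (by linarith)]; nlinarith [le_abs_self ξ]
    rw [chi, h1, h2, sub_self]
  · by_contra hlt
    push_neg at hlt
    rw [htp] at hlt
    apply h
    have h1 : η₀ (ξ / 2 ^ l) = 0 := by
      by_contra h0
      have := hη₀s h0
      rw [Set.mem_Icc] at this
      have habs : |ξ / 2 ^ l| ≤ 8/5 := abs_le.2 ⟨by linarith [this.1], by linarith [this.2]⟩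
      rw [abs_div, abs_of_pos ht, div_le_iff₀ ht] at habs
      nlinarith
    have h2 : η₀ (ξ / 2 ^ (l-1)) = 0 := by
      by_contra h0
      have := hη₀s h0
      rw [Set.mem_Icc] at this
      have ht2 : (0:ℝ) < (2:ℝ) ^ (l-1) := zpow_pos (by norm_num) _
      have habs : |ξ / 2 ^ (l-1)| ≤ 8/5 := abs_le.2 ⟨by linarith [this.1], by linarith [this.2]⟩
      rw [abs_div, abs_of_pos ht2, div_le_iff₀ ht2, htm] at habs
      nlinarith
    rw [chi, h1, h2, sub_self]

end LowModAux

end AuxLowMod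

theorem low_modulation_product_vanishing (η₀ : ℝ → ℝ)
    (hη₀ : ContDiff ℝ (⊤ : ℕ∞) η₀) (hη₀e : ∀ ξ, η₀ (-ξ) = η₀ ξ)
    (hη₀r : ∀ ξ, η₀ ξ ∈ Set.Icc (0 : ℝ) 1)
    (hη₀s : Function.support η₀ ⊆ Set.Icc (-8/5 : ℝ) (8/5))
    (hη₀1 : ∀ ξ ∈ Set.Icc (-(5 : ℝ)/4) (5/4), η₀ ξ = 1)
    (u v : SchwartzMap (ℝ × ℝ) ℂ)
    (hu : Function.support (F2 (⇑u)) ⊆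
      ⋃ k : ℕ, ⋃ (_ : 15 ≤ k),
        {p : ℝ × ℝ | p.1 ∈ Idy (k : ℤ) ∧ |p.2 - ω p.1| ≤ (2 : ℝ) ^ ((k : ℤ) - 14)})
    (hv : Function.support (F2 (⇑v)) ⊆
      ⋃ k : ℕ, ⋃ (_ : 15 ≤ k),
        {p : ℝ × ℝ | p.1 ∈ Idy (k : ℤ) ∧ |p.2 - ω p.1| ≤ (2 : ℝ) ^ ((k : ℤ) - 14)}) :
    ∀ k : ℕ, 15 ≤ k → ∀ ξ τ : ℝ,
      ((chi η₀ (k : ℤ) ξ : ℝ) : ℂ) *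
        ((η₀ ((τ - ω ξ) / 2 ^ ((k : ℤ) - 15)) : ℝ) : ℂ) *
        F2 (fun p => u p * v p) (ξ, τ) = 0 := by
  intro k hk ξ τ
  by_cases hchi : chi η₀ (k : ℤ) ξ = 0
  · rw [hchi]; simp
  by_cases heta : η₀ ((τ - ω ξ) / 2 ^ ((k : ℤ) - 15)) = 0
  · rw [heta]; simp
  suffices h : F2 (fun p => u p * v p) (ξ, τ) = 0 by rw [h, mul_zero]
  rw [LowModAux.F2_mul]
  have hzero : (fun r : ℝ × ℝ => F2 ⇑u ((ξ, τ) - r) * F2 ⇑v r) = fun _ => (0 : ℂ) := by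
    funext r
    rcases eq_or_ne (F2 ⇑v r) 0 with h2 | h2
    · rw [h2, mul_zero]
    rcases eq_or_ne (F2 ⇑u ((ξ, τ) - r)) 0 with h1 | h1
    · rw [h1, zero_mul]
    exfalso
    have hm2 := hv (Function.mem_support.2 h2)
    have hm1 := hu (Function.mem_support.2 h1)
    simp only [Set.mem_iUnion, Set.mem_setOf_eq] at hm1 hm2
    obtain ⟨k₁, hk₁, hI1, hM1⟩ := hm1
    obtain ⟨k₂, hk₂, hI2, hM2⟩ := hm2
    have hfst : ((ξ, τ) - r).1 = ξ - r.1 := rfl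
    have hsnd : ((ξ, τ) - r).2 = τ - r.2 := rfl
    rw [hfst] at hI1
    rw [hfst, hsnd] at hM1
    simp only [Idy, Set.mem_setOf_eq] at hI1 hI2
    set a := ξ - r.1 with ha
    set b := r.1 with hb
    have hab : a + b = ξ := by rw [ha, hb]; ring
    obtain ⟨hξlo, hξhi⟩ := LowModAux.chi_ne_bounds hη₀s hη₀1 hchi
    have hmod : |τ - ω ξ| ≤ 8/5 * 2 ^ ((k:ℤ) - 15) := by
      have hs := hη₀s (Function.mem_support.2 heta)
      rw [Set.mem_Icc] at hs
      have htk : (0:ℝ) < (2:ℝ) ^ ((k:ℤ) - 15) := zpow_pos (by norm_num) _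
      have habs : |(τ - ω ξ) / 2 ^ ((k:ℤ) - 15)| ≤ 8/5 :=
        abs_le.2 ⟨by linarith [hs.1], by linarith [hs.2]⟩
      rw [abs_div, abs_of_pos htk, div_le_iff₀ htk] at habs
      linarith
    have h14 : (0:ℝ) ≤ (2:ℝ) ^ (14:ℤ) := le_of_lt (zpow_pos (by norm_num) _)
    have hmono : ∀ {m n : ℤ}, m ≤ n → (2:ℝ) ^ m ≤ (2:ℝ) ^ n :=
      fun h => zpow_le_zpow_right₀ one_le_two h
    have haa : (2:ℝ) ^ (14:ℤ) ≤ |a| := le_trans (hmono (by omega : (14:ℤ) ≤ (k₁:ℤ) - 1)) hI1.1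
    have hbb : (2:ℝ) ^ (14:ℤ) ≤ |b| := le_trans (hmono (by omega : (14:ℤ) ≤ (k₂:ℤ) - 1)) hI2.1
    have hcc : (2:ℝ) ^ (14:ℤ) ≤ |a + b| := by
      rw [hab]; exact le_trans (hmono (by omega : (14:ℤ) ≤ (k:ℤ) - 1)) hξlo
    obtain ⟨hKa, hKb, hKc⟩ := LowModAux.resonance_lb _ _ _ h14 haa hbb hcc
    set K := abs ((a+b)*(abs (a+b)) - a*(abs a) - b*(abs b)) with hKdef
    have hexp : ∀ m n : ℤ, (2:ℝ) ^ m * (2:ℝ) ^ n = (2:ℝ) ^ (m + n) :=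
      fun m n => (zpow_add₀ (by norm_num : (2:ℝ) ≠ 0) m n).symm
    have hKa' : (2:ℝ) ^ ((k₁:ℤ) + 13) ≤ K := by
      calc (2:ℝ) ^ ((k₁:ℤ) + 13) = (2:ℝ) ^ (14:ℤ) * (2:ℝ) ^ ((k₁:ℤ) - 1) := by
            rw [hexp]; congr 1; ring
        _ ≤ (2:ℝ) ^ (14:ℤ) * |a| := by
            exact mul_le_mul_of_nonneg_left hI1.1 h14
        _ ≤ K := hKa
    have hKb' : (2:ℝ) ^ ((k₂:ℤ) + 13) ≤ K := by
      calc (2:ℝ) ^ ((k₂:ℤ) + 13) = (2:ℝ) ^ (14:ℤ) * (2:ℝ) ^ ((k₂:ℤ) - 1) := by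
            rw [hexp]; congr 1; ring
        _ ≤ (2:ℝ) ^ (14:ℤ) * |b| := mul_le_mul_of_nonneg_left hI2.1 h14
        _ ≤ K := hKb
    have hKc' : (2:ℝ) ^ ((k:ℤ) + 13) ≤ K := by
      calc (2:ℝ) ^ ((k:ℤ) + 13) = (2:ℝ) ^ (14:ℤ) * (2:ℝ) ^ ((k:ℤ) - 1) := by
            rw [hexp]; congr 1; ring
        _ ≤ (2:ℝ) ^ (14:ℤ) * |a + b| := by
            rw [hab]; exact mul_le_mul_of_nonneg_left hξlo h14
        _ ≤ K := hKc
    have hKpos : (0:ℝ) < K := lt_of_lt_of_le (zpow_pos (by norm_num) _) hKc'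
    have htri : K ≤ |τ - ω ξ| + |τ - r.2 - ω a| + |r.2 - ω b| := by
      have hgid : (a+b)*(abs (a+b)) - a*(abs a) - b*(abs b)
          = (τ - ω (a+b)) + (-((τ - r.2) - ω a)) + (-(r.2 - ω b)) := by
        simp only [ω]; ring
      rw [hKdef, hgid, hab]
      calc |(τ - ω ξ) + (-((τ - r.2) - ω a)) + (-(r.2 - ω b))|
          ≤ |τ - ω ξ| + |(-((τ - r.2) - ω a))| + |(-(r.2 - ω b))| := abs_add_three _ _ _
        _ = |τ - ω ξ| + |τ - r.2 - ω a| + |r.2 - ω b| := by rw [abs_neg, abs_neg]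
    -- convert dyadic bounds into multiples of K
    have hY : 134217728 * |τ - r.2 - ω a| ≤ K := by
      calc 134217728 * |τ - r.2 - ω a| ≤ 134217728 * (2:ℝ) ^ ((k₁:ℤ) - 14) := by
            exact mul_le_mul_of_nonneg_left hM1 (by norm_num)
        _ = (2:ℝ) ^ ((k₁:ℤ) + 13) := by
            rw [show (134217728:ℝ) = (2:ℝ) ^ (27:ℤ) by norm_num, hexp]; congr 1; ring
        _ ≤ K := hKa'
    have hZ : 134217728 * |r.2 - ω b| ≤ K := by
      calc 134217728 * |r.2 - ω b| ≤ 134217728 * (2:ℝ) ^ ((k₂:ℤ) - 14) :=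
            mul_le_mul_of_nonneg_left hM2 (by norm_num)
        _ = (2:ℝ) ^ ((k₂:ℤ) + 13) := by
            rw [show (134217728:ℝ) = (2:ℝ) ^ (27:ℤ) by norm_num, hexp]; congr 1; ring
        _ ≤ K := hKb'
    have hX : 268435456 * |τ - ω ξ| ≤ 8/5 * K := by
      calc 268435456 * |τ - ω ξ| ≤ 268435456 * (8/5 * (2:ℝ) ^ ((k:ℤ) - 15)) :=
            mul_le_mul_of_nonneg_left hmod (by norm_num)
        _ = 8/5 * (2:ℝ) ^ ((k:ℤ) + 13) := by
            rw [show (268435456:ℝ) = (2:ℝ) ^ (28:ℤ) by norm_num]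
            rw [mul_comm ((2:ℝ) ^ (28:ℤ)), mul_assoc, hexp]
            congr 2
            ring
        _ ≤ 8/5 * K := by linarith
    linarith
  rw [hzero, integral_zero, smul_zero]
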